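/- arXiv:1408.3775 — 5 statements merged into one kernel-verified Lean document; each statement's English description precedes it below -/
import Mathlib

section
/- Let V be a finite set of truth-values partitioned into designated set D and undesignated set U, and suppose there exists an injective map from V into {F,T}^{s+1} given by a separating sequence of length s+1 whose first component is the characteristic function t of D. Then log₂|V| ≤ s+1. Moreover, if both D and U are nonempty, a separating sequence of length 1 + ⌈log₂(max(|D|,|U|))⌉ suffices: there exist functions θ₁,…,θ_k : V → V with k = ⌈log₂(max(|D|,|U|))⌉ such that the map z ↦ ⟨t(z), t(θ₁(z)),…,t(θ_k(z))⟩ is injective, provided every function V → V is available (i.e., the logic is functionally complete on unary operations). -/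
/-- Bounds on the length of a separating sequence: any separating
sequence of length s+1 forces |V| ≤ 2^(s+1) (i.e. log₂|V| ≤ s+1), and, when all
unary functions on V are available and both D and its complement are nonempty,
a separating sequence of length 1 + ⌈log₂(max(|D|,|Dᶜ|))⌉ suffices. -/
theorem separating_sequence_bounds {V : Type*} [Fintype V] [DecidableEq V]
    (D : Finset V) (t : V → Bool) (ht : ∀ v, t v = true ↔ v ∈ D)
    (s : ℕ) (θ : Fin (s + 1) → V → V) (h0 : θ 0 = id)
    (hinj : Function.Injective (fun z : V => fun r : Fin (s + 1) => t (θ r z))) :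
    Fintype.card V ≤ 2 ^ (s + 1) ∧
    (D.Nonempty → Dᶜ.Nonempty →
      ∃ θ' : Fin (Nat.clog 2 (max D.card Dᶜ.card)) → V → V,
        Function.Injective
          (fun z : V => (t z, fun r : Fin (Nat.clog 2 (max D.card Dᶜ.card)) => t (θ' r z)))) := by
  constructor
  · calc Fintype.card V ≤ Fintype.card (Fin (s + 1) → Bool) :=
          Fintype.card_le_of_injective _ hinj
      _ = 2 ^ (s + 1) := by simp
  · intro hD hU
    set k := Nat.clog 2 (max D.card Dᶜ.card) with hk
    obtain ⟨d, hd⟩ := hD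
    obtain ⟨u, hu⟩ := hU
    have htd : t d = true := (ht d).2 hd
    have htu : t u = false := by
      rw [Finset.mem_compl] at hu
      have := (ht u).not
      simp only [not_true, Bool.not_eq_true] at this ⊢
      exact (Bool.not_eq_true (t u)).mp (fun h => hu ((ht u).1 h))
    have hpow : ∀ S : Finset V, S.card ≤ max D.card Dᶜ.card →
        Nonempty ({x // x ∈ S} ↪ (Fin k → Bool)) := by
      intro S hS
      apply Function.Embedding.nonempty_of_card_le
      rw [Fintype.card_coe]
      calc S.card ≤ max D.card Dᶜ.card := hS
        _ ≤ 2 ^ k := Nat.le_pow_clog one_lt_two _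
        _ = Fintype.card (Fin k → Bool) := by simp
    obtain ⟨eD⟩ := hpow D (le_max_left _ _)
    obtain ⟨eU⟩ := hpow Dᶜ (le_max_right _ _)
    classical
    obtain ⟨code, hcodeD, hcodeU⟩ :
        ∃ code : V → Fin k → Bool,
          (∀ z (hz : z ∈ D), code z = eD ⟨z, hz⟩) ∧
          (∀ z (hz : z ∉ D), code z = eU ⟨z, Finset.mem_compl.2 hz⟩) :=
      ⟨fun z => if hz : z ∈ D then eD ⟨z, hz⟩ else eU ⟨z, Finset.mem_compl.2 hz⟩,
        fun z hz => dif_pos hz, fun z hz => dif_neg hz⟩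
    refine ⟨fun r z => if code z r then d else u, ?_⟩
    have hcode : ∀ z r, t ((if code z r then d else u : V)) = code z r := by
      intro z r
      by_cases h : code z r = true
      · simp [h, htd]
      · simp only [Bool.not_eq_true] at h
        simp [h, htu]
    intro z1 z2 h
    simp only [Prod.mk.injEq] at h
    obtain ⟨h1, h2⟩ := h
    have hc : code z1 = code z2 := by
      funext r
      have := congrFun h2 r
      rwa [hcode, hcode] at this
    by_cases hz1 : z1 ∈ D
    · have hz2 : z2 ∈ D := (ht z2).1 (h1 ▸ (ht z1).2 hz1)
      have : eD ⟨z1, hz1⟩ = eD ⟨z2, hz2⟩ := by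
        simpa [hcodeD _ hz1, hcodeD _ hz2] using hc
      exact Subtype.ext_iff.mp (eD.injective this)
    · have hz2 : z2 ∉ D := fun h' => hz1 ((ht z1).1 (h1.symm ▸ (ht z2).2 h'))
      have : eU ⟨z1, Finset.mem_compl.2 hz1⟩ = eU ⟨z2, Finset.mem_compl.2 hz2⟩ := by
        simpa [hcodeU _ hz1, hcodeU _ hz2] using hc
      exact Subtype.ext_iff.mp (eU.injective this)
end

section
/- In 4-valued Gödel logic G₄ with values {0, 1/3, 2/3, 1}, min-conjunction, max-disjunction, Gödel negation ¬x = (1 if x = 0 else 0) and Gödel implication x ⊃ y = (1 if x ≤ y else y), the set of unary functions definable by one-variable formulas (the closure of {id} under the pointwise clones of ∧, ∨, ¬, ⊃) has exactly six elements, and none of these functions f satisfies t(f(1/3)) ≠ t(f(2/3)), where t(v) = T iff v = 1. Consequently, G₄ is not separable: the values 1/3 and 2/3 are indistinguishable by any one-variable formula. -/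
/-- The set of unary functions on the Gödel algebra G₄ definable by one-variable
formulas: the least set containing the identity and closed under the pointwise
liftings of min-conjunction, max-disjunction, Gödel negation and Gödel implication. -/
inductive G4Def : (ℚ → ℚ) → Prop
  | id : G4Def (fun x => x)
  | conj {f g : ℚ → ℚ} : G4Def f → G4Def g → G4Def (fun x => min (f x) (g x))
  | disj {f g : ℚ → ℚ} : G4Def f → G4Def g → G4Def (fun x => max (f x) (g x))
  | neg {f : ℚ → ℚ} : G4Def f → G4Def (fun x => if f x = 0 then 1 else 0)
  | imp {f g : ℚ → ℚ} : G4Def f → G4Def g → G4Def (fun x => if f x ≤ g x then 1 else g x)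

/-- The four truth-values of G₄. -/
def G4vals : Fin 4 → ℚ := ![0, 1/3, 2/3, 1]

def Squad : Set (ℚ × ℚ × ℚ × ℚ) :=
  {(0,1/3,2/3,1), (0,0,0,0), (1,1,1,1), (1,0,0,0), (0,1,1,1), (1,1/3,2/3,1)}

lemma g4key : ∀ f, G4Def f → (f 0, f (1/3), f (2/3), f 1) ∈ Squad := by
  intro f hf
  induction hf with
  | id => simp [Squad]
  | conj hf hg ih1 ih2 =>
    simp only [Squad, Set.mem_insert_iff, Set.mem_singleton_iff, Prod.mk.injEq] at *
    rcases ih1 with ⟨a,b,c,d⟩|⟨a,b,c,d⟩|⟨a,b,c,d⟩|⟨a,b,c,d⟩|⟨a,b,c,d⟩|⟨a,b,c,d⟩ <;>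
    rcases ih2 with ⟨a',b',c',d'⟩|⟨a',b',c',d'⟩|⟨a',b',c',d'⟩|⟨a',b',c',d'⟩|⟨a',b',c',d'⟩|⟨a',b',c',d'⟩ <;>
      simp only [a,b,c,d,a',b',c',d'] <;> norm_num [min_def]
  | disj hf hg ih1 ih2 =>
    simp only [Squad, Set.mem_insert_iff, Set.mem_singleton_iff, Prod.mk.injEq] at *
    rcases ih1 with ⟨a,b,c,d⟩|⟨a,b,c,d⟩|⟨a,b,c,d⟩|⟨a,b,c,d⟩|⟨a,b,c,d⟩|⟨a,b,c,d⟩ <;>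
    rcases ih2 with ⟨a',b',c',d'⟩|⟨a',b',c',d'⟩|⟨a',b',c',d'⟩|⟨a',b',c',d'⟩|⟨a',b',c',d'⟩|⟨a',b',c',d'⟩ <;>
      simp only [a,b,c,d,a',b',c',d'] <;> norm_num [max_def]
  | neg hf ih1 =>
    simp only [Squad, Set.mem_insert_iff, Set.mem_singleton_iff, Prod.mk.injEq] at *
    rcases ih1 with ⟨a,b,c,d⟩|⟨a,b,c,d⟩|⟨a,b,c,d⟩|⟨a,b,c,d⟩|⟨a,b,c,d⟩|⟨a,b,c,d⟩ <;>
      simp only [a,b,c,d] <;> norm_num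
  | imp hf hg ih1 ih2 =>
    simp only [Squad, Set.mem_insert_iff, Set.mem_singleton_iff, Prod.mk.injEq] at *
    rcases ih1 with ⟨a,b,c,d⟩|⟨a,b,c,d⟩|⟨a,b,c,d⟩|⟨a,b,c,d⟩|⟨a,b,c,d⟩|⟨a,b,c,d⟩ <;>
    rcases ih2 with ⟨a',b',c',d'⟩|⟨a',b',c',d'⟩|⟨a',b',c',d'⟩|⟨a',b',c',d'⟩|⟨a',b',c',d'⟩|⟨a',b',c',d'⟩ <;>
      simp only [a,b,c,d,a',b',c',d'] <;> norm_num

/-- In G₄ there are exactly six definable unary operations (as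
functions on the truth-values {0,1/3,2/3,1}), and none of them distinguishes
1/3 from 2/3 (with t(v) = T iff v = 1); hence G₄ is not separable. -/
theorem godel4_not_separable (t : ℚ → Bool) (ht : ∀ v, t v = true ↔ v = 1) :
    {g : Fin 4 → ℚ | ∃ f : ℚ → ℚ, G4Def f ∧ g = fun i => f (G4vals i)}.ncard = 6 ∧
    ∀ f : ℚ → ℚ, G4Def f → t (f (1/3)) = t (f (2/3)) := by
  constructor
  · have hset : {g : Fin 4 → ℚ | ∃ f : ℚ → ℚ, G4Def f ∧ g = fun i => f (G4vals i)} =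
        {![0,1/3,2/3,1], ![0,0,0,0], ![1,1,1,1], ![1,0,0,0], ![0,1,1,1], ![1,1/3,2/3,1]} := by
      ext g
      constructor
      · rintro ⟨f, hf, rfl⟩
        have h := g4key f hf
        simp only [Squad, Set.mem_insert_iff, Set.mem_singleton_iff, Prod.mk.injEq] at h ⊢
        rcases h with ⟨a,b,c,d⟩|⟨a,b,c,d⟩|⟨a,b,c,d⟩|⟨a,b,c,d⟩|⟨a,b,c,d⟩|⟨a,b,c,d⟩ <;>
            rw [show (1:ℚ)/3 = 3⁻¹ by norm_num] at b
        · exact Or.inl (by funext i; fin_cases i <;> simp [G4vals, a, b, c, d])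
        · exact Or.inr (Or.inl (by funext i; fin_cases i <;> simp [G4vals, a, b, c, d]))
        · exact Or.inr (Or.inr (Or.inl (by funext i; fin_cases i <;> simp [G4vals, a, b, c, d])))
        · exact Or.inr (Or.inr (Or.inr (Or.inl (by funext i; fin_cases i <;> simp [G4vals, a, b, c, d]))))
        · exact Or.inr (Or.inr (Or.inr (Or.inr (Or.inl (by funext i; fin_cases i <;> simp [G4vals, a, b, c, d])))))
        · exact Or.inr (Or.inr (Or.inr (Or.inr (Or.inr (by funext i; fin_cases i <;> simp [G4vals, a, b, c, d])))))
      · intro hg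
        simp only [Set.mem_insert_iff, Set.mem_singleton_iff] at hg
        rcases hg with rfl|rfl|rfl|rfl|rfl|rfl
        · exact ⟨_, G4Def.id, by funext i; fin_cases i <;> norm_num [G4vals]⟩
        · exact ⟨_, G4Def.neg (G4Def.imp G4Def.id G4Def.id),
            by funext i; fin_cases i <;> norm_num [G4vals]⟩
        · exact ⟨_, G4Def.imp G4Def.id G4Def.id,
            by funext i; fin_cases i <;> norm_num [G4vals]⟩
        · exact ⟨_, G4Def.neg G4Def.id, by funext i; fin_cases i <;> norm_num [G4vals]⟩
        · exact ⟨_, G4Def.neg (G4Def.neg G4Def.id),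
            by funext i; fin_cases i <;> norm_num [G4vals]⟩
        · exact ⟨_, G4Def.disj (G4Def.neg G4Def.id) G4Def.id,
            by funext i; fin_cases i <;> norm_num [G4vals, max_def]⟩
    rw [hset]
    have n1 : (![0,1/3,2/3,1] : Fin 4 → ℚ) ∉
        ({![0,0,0,0], ![1,1,1,1], ![1,0,0,0], ![0,1,1,1], ![1,1/3,2/3,1]} : Set (Fin 4 → ℚ)) := by
      intro h
      simp only [Set.mem_insert_iff, Set.mem_singleton_iff] at h
      rcases h with h|h|h|h|h <;>
        first
          | (have := congrFun h 0; norm_num at this; done)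
          | (have := congrFun h 1; norm_num at this; done)
    have n2 : (![0,0,0,0] : Fin 4 → ℚ) ∉
        ({![1,1,1,1], ![1,0,0,0], ![0,1,1,1], ![1,1/3,2/3,1]} : Set (Fin 4 → ℚ)) := by
      intro h
      simp only [Set.mem_insert_iff, Set.mem_singleton_iff] at h
      rcases h with h|h|h|h <;>
        first
          | (have := congrFun h 0; norm_num at this; done)
          | (have := congrFun h 1; norm_num at this; done)
    have n3 : (![1,1,1,1] : Fin 4 → ℚ) ∉
        ({![1,0,0,0], ![0,1,1,1], ![1,1/3,2/3,1]} : Set (Fin 4 → ℚ)) := by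
      intro h
      simp only [Set.mem_insert_iff, Set.mem_singleton_iff] at h
      rcases h with h|h|h <;>
        first
          | (have := congrFun h 0; norm_num at this; done)
          | (have := congrFun h 1; norm_num at this; done)
    have n4 : (![1,0,0,0] : Fin 4 → ℚ) ∉
        ({![0,1,1,1], ![1,1/3,2/3,1]} : Set (Fin 4 → ℚ)) := by
      intro h
      simp only [Set.mem_insert_iff, Set.mem_singleton_iff] at h
      rcases h with h|h <;>
        first
          | (have := congrFun h 0; norm_num at this; done)
          | (have := congrFun h 1; norm_num at this; done)
    have n5 : (![0,1,1,1] : Fin 4 → ℚ) ∉ ({![1,1/3,2/3,1]} : Set (Fin 4 → ℚ)) := by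
      intro h
      simp only [Set.mem_singleton_iff] at h
      have := congrFun h 0; norm_num at this
    rw [Set.ncard_insert_of_notMem n1, Set.ncard_insert_of_notMem n2,
        Set.ncard_insert_of_notMem n3, Set.ncard_insert_of_notMem n4,
        Set.ncard_insert_of_notMem n5, Set.ncard_singleton]
  · intro f hf
    have h := g4key f hf
    have h13 : t (1/3 : ℚ) = false := by
      rw [← Bool.not_eq_true, ht]; norm_num
    have h23 : t (2/3 : ℚ) = false := by
      rw [← Bool.not_eq_true, ht]; norm_num
    simp only [Squad, Set.mem_insert_iff, Set.mem_singleton_iff, Prod.mk.injEq] at h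
    rcases h with ⟨a,b,c,d⟩|⟨a,b,c,d⟩|⟨a,b,c,d⟩|⟨a,b,c,d⟩|⟨a,b,c,d⟩|⟨a,b,c,d⟩ <;>
      rw [b, c] <;> first | rfl | rw [h13, h23]
end

section
/- Let ⟨V, D⟩ be a finite logical matrix for a Σ-algebra V that is simple (every non-trivial congruence of V relates some element of D with some element of V \ D). Suppose the values x ≠ y ∈ V are not distinguished by any Σ-term in one variable composed with the characteristic function t of D. Then there exists a Σ-term φ(q₁,…,q_k) and tuples (l₁,…,l_k), (r₁,…,r_k) ∈ V^k such that t(φ^V(l₁,…,l_k)) ≠ t(φ^V(r₁,…,r_k)) and for each i, either l_i = r_i or {l_i, r_i} = {x, y}. -/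
namespace Stmt11

/-- Terms over a signature `σ` with arity function `ar`, with variables from `A`. -/
inductive Tm (σ : Type) (ar : σ → ℕ) (A : Type) : Type
  | var (a : A) : Tm σ ar A
  | app (f : σ) (ts : Fin (ar f) → Tm σ ar A) : Tm σ ar A

/-- Evaluation of a term in a `σ`-algebra `I` on `V`, under the assignment `e`. -/
def Tm.eval {σ : Type} {ar : σ → ℕ} {V A : Type} (I : ∀ f : σ, (Fin (ar f) → V) → V)
    (e : A → V) : Tm σ ar A → V
  | .var a => e a
  | .app f ts => I f (fun i => (ts i).eval I e)

def Tm.relabel {σ : Type} {ar : σ → ℕ} {A B : Type} (g : A → B) : Tm σ ar A → Tm σ ar B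
  | .var a => .var (g a)
  | .app f ts => .app f (fun i => (ts i).relabel g)

theorem Tm.eval_relabel {σ : Type} {ar : σ → ℕ} {V A B : Type}
    (I : ∀ f : σ, (Fin (ar f) → V) → V) (g : A → B) (e : B → V) :
    ∀ φ : Tm σ ar A, (φ.relabel g).eval I e = φ.eval I (e ∘ g)
  | .var a => rfl
  | .app f ts => by
      simp only [Tm.relabel, Tm.eval]
      congr 1
      funext i
      exact Tm.eval_relabel I g e (ts i)

/-- `a` and `b` are connected by one "polynomial translation" step. -/
def Sep {σ : Type} {ar : σ → ℕ} {V : Type} (I : ∀ f : σ, (Fin (ar f) → V) → V)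
    (x y a b : V) : Prop :=
  ∃ (k : ℕ) (φ : Tm σ ar (Fin k)) (l r : Fin k → V),
    (∀ i : Fin k, l i = r i ∨ ({l i, r i} : Set V) = {x, y}) ∧
    φ.eval I l = a ∧ φ.eval I r = b

theorem sep_update {σ : Type} {ar : σ → ℕ} {V : Type}
    (I : ∀ f : σ, (Fin (ar f) → V) → V) (x y : V) {a b : V}
    (h : Sep I x y a b) (f : σ) (xs : Fin (ar f) → V) (i : Fin (ar f)) :
    Sep I x y (I f (Function.update xs i a)) (I f (Function.update xs i b)) := by
  obtain ⟨k, φ, l, r, hc, hl, hr⟩ := h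
  refine ⟨k + ar f,
    .app f (fun j => if j = i then φ.relabel (Fin.castAdd (ar f)) else .var (Fin.natAdd k j)),
    Fin.append l xs, Fin.append r xs, ?_, ?_, ?_⟩
  · intro j
    refine Fin.addCases (fun m => ?_) (fun m => ?_) j
    · simpa [Fin.append_left] using hc m
    · simp [Fin.append_right]
  all_goals {
    simp only [Tm.eval]
    congr 1
    funext j
    by_cases hj : j = i
    · subst hj
      have hcast : ∀ c : Fin k → V, (Fin.append c xs) ∘ Fin.castAdd (ar f) = c := by
        intro c; funext m; simp [Fin.append_left]
      simp [Tm.eval_relabel, hcast, hl, hr]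
    · simp [hj, Tm.eval, Fin.append_right, Function.update_apply]
  }

theorem eqvgen_update {σ : Type} {ar : σ → ℕ} {V : Type}
    (I : ∀ f : σ, (Fin (ar f) → V) → V) (x y : V) {a b : V}
    (h : Relation.EqvGen (Sep I x y) a b) (f : σ) (xs : Fin (ar f) → V) (i : Fin (ar f)) :
    Relation.EqvGen (Sep I x y) (I f (Function.update xs i a)) (I f (Function.update xs i b)) := by
  induction h with
  | rel a b hab => exact Relation.EqvGen.rel _ _ (sep_update I x y hab f xs i)
  | refl a => exact Relation.EqvGen.refl _
  | symm a b hab ih => exact Relation.EqvGen.symm _ _ ih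
  | trans a b c h1 h2 ih1 ih2 => exact Relation.EqvGen.trans _ _ _ ih1 ih2

theorem eqvgen_compat {σ : Type} {ar : σ → ℕ} {V : Type}
    (I : ∀ f : σ, (Fin (ar f) → V) → V) (x y : V)
    (f : σ) (xs ys : Fin (ar f) → V) (h : ∀ i, Relation.EqvGen (Sep I x y) (xs i) (ys i)) :
    Relation.EqvGen (Sep I x y) (I f xs) (I f ys) := by
  have key : ∀ n : ℕ, Relation.EqvGen (Sep I x y) (I f xs)
      (I f (fun j => if (j : ℕ) < n then ys j else xs j)) := by
    intro n
    induction n with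
    | zero =>
      have : (fun j : Fin (ar f) => if (j : ℕ) < 0 then ys j else xs j) = xs := by
        funext j; simp
      rw [this]
      exact Relation.EqvGen.refl _
    | succ n ih =>
      by_cases hn : n < ar f
      · set g : Fin (ar f) → V := fun j => if (j : ℕ) < n then ys j else xs j with hg
        have h1 : (fun j : Fin (ar f) => if (j : ℕ) < n + 1 then ys j else xs j)
            = Function.update g ⟨n, hn⟩ (ys ⟨n, hn⟩) := by
          funext j
          rw [Function.update_apply]
          by_cases hj : j = ⟨n, hn⟩
          · subst hj; simp
          · have hj' : (j : ℕ) ≠ n := fun hh => hj (Fin.ext hh)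
            have : (j : ℕ) < n + 1 ↔ (j : ℕ) < n := by omega
            simp [hj, this, hg]
        have h2 : g = Function.update g ⟨n, hn⟩ (xs ⟨n, hn⟩) := by
          funext j
          rw [Function.update_apply]
          by_cases hj : j = ⟨n, hn⟩
          · subst hj; simp [hg]
          · simp [hj]
        rw [h1]
        refine Relation.EqvGen.trans _ _ _ ih ?_
        conv_lhs => rw [h2]
        exact eqvgen_update I x y (h ⟨n, hn⟩) f g ⟨n, hn⟩
      · have : (fun j : Fin (ar f) => if (j : ℕ) < n + 1 then ys j else xs j)
            = (fun j : Fin (ar f) => if (j : ℕ) < n then ys j else xs j) := by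
          funext j
          have hj : (j : ℕ) < n := lt_of_lt_of_le j.isLt (not_lt.mp hn)
          simp [hj, Nat.lt_succ_of_lt hj]
        rw [this]
        exact ih
  have : (fun j : Fin (ar f) => if (j : ℕ) < ar f then ys j else xs j) = ys := by
    funext j; simp [j.isLt]
  have hk := key (ar f)
  rwa [this] at hk

theorem simple_matrix_witness {σ : Type} {ar : σ → ℕ} {V : Type} [Fintype V]
    (I : ∀ f : σ, (Fin (ar f) → V) → V) (D : Set V)
    (t : V → Bool) (ht : ∀ v, t v = true ↔ v ∈ D)
    (hsimple : ∀ r : V → V → Prop, Equivalence r →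
      (∀ (f : σ) (xs ys : Fin (ar f) → V), (∀ i, r (xs i) (ys i)) → r (I f xs) (I f ys)) →
      (∃ a b : V, a ≠ b ∧ r a b) → ∃ a b : V, r a b ∧ a ∈ D ∧ b ∉ D)
    (x y : V) (hxy : x ≠ y)
    (hindist : ∀ θ : Tm σ ar Unit,
      t (θ.eval I (fun _ => x)) = t (θ.eval I (fun _ => y))) :
    ∃ (k : ℕ) (φ : Tm σ ar (Fin k)) (l r : Fin k → V),
      t (φ.eval I l) ≠ t (φ.eval I r) ∧
      ∀ i : Fin k, l i = r i ∨ ({l i, r i} : Set V) = {x, y} := by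
  by_contra hcon
  have hflat : ∀ a b : V, Sep I x y a b → t a = t b := by
    rintro a b ⟨k, φ, l, r, hc, rfl, rfl⟩
    by_contra hne
    exact hcon ⟨k, φ, l, r, hne, hc⟩
  have hequiv : Equivalence (Relation.EqvGen (Sep I x y)) := Relation.EqvGen.is_equivalence _
  obtain ⟨a, b, hab, ha, hb⟩ := hsimple _ hequiv (eqvgen_compat I x y)
    ⟨x, y, hxy, Relation.EqvGen.rel _ _ ⟨1, .var 0, fun _ => x, fun _ => y,
      fun _ => Or.inr rfl, rfl, rfl⟩⟩
  have hteq : ∀ a b : V, Relation.EqvGen (Sep I x y) a b → t a = t b := by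
    intro a b hab
    induction hab with
    | rel a b h => exact hflat _ _ h
    | refl a => rfl
    | symm a b h ih => exact ih.symm
    | trans a b c h1 h2 ih1 ih2 => exact ih1.trans ih2
  exact hb ((ht b).mp (hteq a b hab ▸ (ht a).mpr ha))

end Stmt11
end

section
/- Define a generalized complexity function cplx on formulas (relative to a separating sequence θ₀,…,θ_s with θ₀ = id) by: cplx(φ) = 0 if φ is basic (of the form θ_r(ψ) with ψ atomic or a sentential constant) or an intersection formula, and cplx(θ_r(⊙(φ₁,…,φ_k))) = 1 + max over 0 ≤ t ≤ s and 1 ≤ i ≤ k of cplx(θ_t(φ_i)) when θ_r⊙ is the most concrete fit. Then cplx is well-defined (the recursion terminates) and for every proper θ_r⊙-formula φ = θ_r(⊙(φ₁,…,φ_k)) and every 0 ≤ t ≤ s, 1 ≤ i ≤ k, one has cplx(θ_t(φ_i)) < cplx(φ). -/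
namespace Stmt14

/-- Terms (formulas) over a signature `σ` with arity `ar`, variables from `A`. -/
inductive Tm (σ : Type) (ar : σ → ℕ) (A : Type) : Type
  | var (a : A) : Tm σ ar A
  | app (f : σ) (ts : Fin (ar f) → Tm σ ar A) : Tm σ ar A

/-- Substitution of `ψ` for the unique variable of the one-variable term `θ`. -/
def Tm.subst1 {σ : Type} {ar : σ → ℕ} {A : Type} (θ : Tm σ ar Unit) (ψ : Tm σ ar A) :
    Tm σ ar A :=
  match θ with
  | .var _ => ψ
  | .app f ts => .app f (fun i => (ts i).subst1 ψ)

variable {σ : Type} {ar : σ → ℕ} {s : ℕ}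

/-- The instance set S(θ_r ⊙) of the pattern θ_r(⊙(q₁,…,q_k)). -/
def pat (θ : Fin (s + 1) → Tm σ ar Unit) (r : Fin (s + 1)) (f : σ) :
    Set (Tm σ ar ℕ) :=
  {x | ∃ args : Fin (ar f) → Tm σ ar ℕ, x = (θ r).subst1 (Tm.app f args)}

/-- θ_r⊙ is a fit for φ. -/
def Fit (θ : Fin (s + 1) → Tm σ ar Unit) (r : Fin (s + 1)) (f : σ)
    (φ : Tm σ ar ℕ) : Prop :=
  φ ∈ pat θ r f

/-- φ is basic: a separator applied to an atomic variable or a sentential constant. -/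
def Basic (θ : Fin (s + 1) → Tm σ ar Unit) (φ : Tm σ ar ℕ) : Prop :=
  ∃ (r : Fin (s + 1)) (ψ : Tm σ ar ℕ),
    ((∃ a : ℕ, ψ = Tm.var a) ∨
     (∃ (c : σ) (args : Fin (ar c) → Tm σ ar ℕ), ar c = 0 ∧ ψ = Tm.app c args)) ∧
    φ = (θ r).subst1 ψ

/-- φ is an intersection formula: the unique common instance of two distinct patterns. -/
def Inter (θ : Fin (s + 1) → Tm σ ar Unit) (φ : Tm σ ar ℕ) : Prop :=
  ∃ (r₁ : Fin (s + 1)) (f₁ : σ) (r₂ : Fin (s + 1)) (f₂ : σ),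
    (r₁, f₁) ≠ (r₂, f₂) ∧ pat θ r₁ f₁ ∩ pat θ r₂ f₂ = {φ}

/-- φ is a proper θ_r⊙-formula: nonbasic, not an intersection formula, with
θ_r⊙ its most concrete fit (⊙ of nonzero arity). -/
def Proper (θ : Fin (s + 1) → Tm σ ar Unit) (r : Fin (s + 1)) (f : σ)
    (φ : Tm σ ar ℕ) : Prop :=
  ¬ Basic θ φ ∧ ¬ Inter θ φ ∧ 0 < ar f ∧ Fit θ r f φ ∧
    ∀ (r' : Fin (s + 1)) (f' : σ), Fit θ r' f' φ → pat θ r f ⊆ pat θ r' f'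

/-! The recursion terminates for the measure "least size of a `ψ` with `φ = θ_t(ψ)`".
For a proper θ_r⊙-formula `φ = θ_r(⊙(φ₁,…,φ_k))` this least size is attained at
`ψ = ⊙(φ₁,…,φ_k)`. Indeed `θ_r` mentions its variable (otherwise `φ` would be basic), and any
other decomposition `φ = θ_u(⊡(…))` is a fit, hence its pattern contains that of `θ_r⊙`;
following an occurrence of the variable in `θ_r` through both patterns shows that
`⊙(φ₁,…,φ_k)` is either equal to `⊡(…)` or a proper subterm of it. Applied in both
directions, this also shows that two most concrete fits of `φ` have the same `⊙` and the
same `φᵢ`, so the recursive clause is unambiguous. -/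

namespace Tm

variable {A : Type}

def size : Tm σ ar A → ℕ
  | .var _ => 1
  | .app _ ts => 1 + ∑ i, (ts i).size

def HasHole : Tm σ ar Unit → Prop
  | .var _ => True
  | .app _ ts => ∃ i, (ts i).HasHole

@[simp]
lemma subst1_var (u : Unit) (ψ : Tm σ ar A) : (Tm.var u : Tm σ ar Unit).subst1 ψ = ψ := rfl

@[simp]
lemma subst1_app (g : σ) (us : Fin (ar g) → Tm σ ar Unit) (ψ : Tm σ ar A) :
    (Tm.app g us).subst1 ψ = .app g fun i => (us i).subst1 ψ := rfl

lemma size_lt_size_app (g : σ) (ts : Fin (ar g) → Tm σ ar A) (i : Fin (ar g)) :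
    (ts i).size < (Tm.app g ts).size := by
  have := Finset.single_le_sum (f := fun j => (ts j).size) (fun j _ => Nat.zero_le _)
    (Finset.mem_univ i)
  simp only [size]
  omega

lemma subst1_eq_subst1_of_not_hasHole :
    ∀ {θ : Tm σ ar Unit}, ¬ θ.HasHole → ∀ ψ ψ' : Tm σ ar A, θ.subst1 ψ = θ.subst1 ψ'
  | .var _, h, _, _ => absurd trivial h
  | .app g us, h, ψ, ψ' => by
    simp only [HasHole, not_exists] at h
    simp only [subst1_app]
    congr 1
    funext i
    exact subst1_eq_subst1_of_not_hasHole (h i) ψ ψ'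

lemma size_le_size_subst1 :
    ∀ {θ : Tm σ ar Unit}, θ.HasHole → ∀ ψ : Tm σ ar A, ψ.size ≤ (θ.subst1 ψ).size
  | .var _, _, _ => le_rfl
  | .app _ us, ⟨i, hi⟩, ψ =>
    (size_le_size_subst1 hi ψ).trans (size_lt_size_app _ (fun j => (us j).subst1 ψ) i).le

lemma size_lt_size_app_subst1 {g : σ} {us : Fin (ar g) → Tm σ ar Unit}
    (h : (Tm.app g us).HasHole) (ψ : Tm σ ar A) : ψ.size < ((Tm.app g us).subst1 ψ).size := by
  obtain ⟨i, hi⟩ := h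
  exact (size_le_size_subst1 hi ψ).trans_lt (size_lt_size_app _ (fun j => (us j).subst1 ψ) i)

lemma subst1_app_ne_var (θ : Tm σ ar Unit) (g : σ) (y : Fin (ar g) → Tm σ ar A) (a : A) :
    θ.subst1 (.app g y) ≠ .var a := by
  cases θ <;> simp

theorem app_eq_or_size_lt_of_forall_exists [Inhabited A] {f g : σ} (hf : 0 < ar f) :
    ∀ {θ η : Tm σ ar Unit}, θ.HasHole →
      (∀ x : Fin (ar f) → Tm σ ar A, ∃ y : Fin (ar g) → Tm σ ar A,
        θ.subst1 (.app f x) = η.subst1 (.app g y)) →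
      ∀ {x : Fin (ar f) → Tm σ ar A} {y : Fin (ar g) → Tm σ ar A},
        θ.subst1 (.app f x) = η.subst1 (.app g y) →
          Tm.app f x = .app g y ∨ (Tm.app f x).size < (Tm.app g y).size
  | .var _, .var _, _, _, _, _, he => .inl he
  | .app _ _, .var _, hθ, _, _, _, he => .inr <| by
    rw [← show _ = Tm.app _ _ from he]
    exact size_lt_size_app_subst1 hθ _
  | .var _, .app _ _, _, hall, _, _, _ => by
    obtain ⟨y, hy⟩ := hall fun _ => .var default
    simp only [subst1_var, subst1_app, Tm.app.injEq] at hy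
    obtain ⟨rfl, hy⟩ := hy
    exact absurd (congrFun (eq_of_heq hy) ⟨0, hf⟩).symm (subst1_app_ne_var _ _ _ _)
  | .app h us, .app h' ts, ⟨i, hi⟩, hall, _, _, he => by
    obtain ⟨rfl, -⟩ := Tm.app.inj he
    have component {x : Fin (ar f) → Tm σ ar A} {y : Fin (ar g) → Tm σ ar A}
        (he : (Tm.app h us).subst1 (.app f x) = (Tm.app h ts).subst1 (.app g y)) :
        (us i).subst1 (.app f x) = (ts i).subst1 (.app g y) := by
      simp only [subst1_app, Tm.app.injEq, heq_eq_eq, true_and] at he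
      exact congrFun he i
    exact app_eq_or_size_lt_of_forall_exists hf hi
      (fun x => (hall x).imp fun _ => component) (component he)

end Tm

section

variable {θ : Fin (s + 1) → Tm σ ar Unit} {r : Fin (s + 1)} {f : σ} {φ : Tm σ ar ℕ}

namespace Proper

lemma hasHole (hP : Proper θ r f φ) : (θ r).HasHole := by
  by_contra h
  obtain ⟨hBasic, -, -, ⟨x, rfl⟩, -⟩ := hP
  exact hBasic ⟨r, .var 0, .inl ⟨0, rfl⟩, Tm.subst1_eq_subst1_of_not_hasHole h _ _⟩

lemma app_eq_or_size_lt (hP : Proper θ r f φ) {x : Fin (ar f) → Tm σ ar ℕ}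
    (hx : φ = (θ r).subst1 (.app f x)) {u : Fin (s + 1)} {g : σ} {y : Fin (ar g) → Tm σ ar ℕ}
    (hy : φ = (θ u).subst1 (.app g y)) :
    Tm.app f x = .app g y ∨ (Tm.app f x).size < (Tm.app g y).size := by
  have hθ := hP.hasHole
  obtain ⟨-, -, hpos, -, hconcrete⟩ := hP
  exact Tm.app_eq_or_size_lt_of_forall_exists hpos hθ
    (fun x' => hconcrete u g ⟨y, hy⟩ ⟨x', rfl⟩) (hx.symm.trans hy)

lemma size_le (hP : Proper θ r f φ) {x : Fin (ar f) → Tm σ ar ℕ}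
    (hx : φ = (θ r).subst1 (.app f x)) {u : Fin (s + 1)} {ψ : Tm σ ar ℕ}
    (hψ : φ = (θ u).subst1 ψ) : (Tm.app f x).size ≤ ψ.size := by
  cases ψ with
  | var a => exact absurd ⟨u, .var a, .inl ⟨a, rfl⟩, hψ⟩ hP.1
  | app g y => exact (hP.app_eq_or_size_lt hx hψ).elim (fun h => h ▸ le_rfl) le_of_lt

lemma app_eq {r' : Fin (s + 1)} {f' : σ} (hP : Proper θ r f φ) (hP' : Proper θ r' f' φ)
    {x : Fin (ar f) → Tm σ ar ℕ} {x' : Fin (ar f') → Tm σ ar ℕ}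
    (hx : φ = (θ r).subst1 (.app f x)) (hx' : φ = (θ r').subst1 (.app f' x')) :
    Tm.app f x = .app f' x' := by
  rcases hP.app_eq_or_size_lt hx hx' with h | h
  · exact h
  rcases hP'.app_eq_or_size_lt hx' hx with h' | h'
  · exact h'.symm
  · exact absurd (h.trans h') (lt_irrefl _)

end Proper

/-- The pair `⟨⊙, (φ₁,…,φ_k)⟩` read off a proper θ_r⊙-formula `φ = θ_r(⊙(φ₁,…,φ_k))`. -/
def ProperCore (θ : Fin (s + 1) → Tm σ ar Unit) (φ : Tm σ ar ℕ)
    (c : Σ f : σ, Fin (ar f) → Tm σ ar ℕ) : Prop :=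
  ∃ r, Proper θ r c.1 φ ∧ φ = (θ r).subst1 (.app c.1 c.2)

lemma ProperCore.unique {c c' : Σ f : σ, Fin (ar f) → Tm σ ar ℕ} (h : ProperCore θ φ c)
    (h' : ProperCore θ φ c') : c = c' := by
  obtain ⟨r, hP, hx⟩ := h
  obtain ⟨r', hP', hx'⟩ := h'
  obtain ⟨hf, hargs⟩ := Tm.app.inj (hP.app_eq hP' hx hx')
  exact Sigma.ext hf hargs

noncomputable def coreSize (θ : Fin (s + 1) → Tm σ ar Unit) (φ : Tm σ ar ℕ) : ℕ :=
  sInf {n | ∃ t ψ, φ = (θ t).subst1 ψ ∧ ψ.size = n}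

lemma coreSize_subst1_le (t : Fin (s + 1)) (ψ : Tm σ ar ℕ) :
    coreSize θ ((θ t).subst1 ψ) ≤ ψ.size :=
  Nat.sInf_le ⟨t, ψ, rfl, rfl⟩

lemma ProperCore.size_le_coreSize {c : Σ f : σ, Fin (ar f) → Tm σ ar ℕ}
    (h : ProperCore θ φ c) : (Tm.app c.1 c.2).size ≤ coreSize θ φ := by
  obtain ⟨r, hP, hx⟩ := h
  refine le_csInf ⟨_, r, _, hx, rfl⟩ ?_
  rintro _ ⟨u, ψ, hψ, rfl⟩
  exact hP.size_le hx hψ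

lemma ProperCore.coreSize_arg_lt {c : Σ f : σ, Fin (ar f) → Tm σ ar ℕ} (h : ProperCore θ φ c)
    (t : Fin (s + 1)) (i : Fin (ar c.1)) : coreSize θ ((θ t).subst1 (c.2 i)) < coreSize θ φ :=
  (coreSize_subst1_le t _).trans_lt ((Tm.size_lt_size_app _ _ i).trans_le h.size_le_coreSize)

open Classical in
noncomputable def cplx (θ : Fin (s + 1) → Tm σ ar Unit) (φ : Tm σ ar ℕ) : ℕ :=
  if h : ∃ c, ProperCore θ φ c then
    1 + Finset.univ.sup fun q : Fin (s + 1) × Fin (ar h.choose.1) =>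
      cplx θ ((θ q.1).subst1 (h.choose.2 q.2))
  else 0
termination_by coreSize θ φ
decreasing_by exact h.choose_spec.coreSize_arg_lt q.1 q.2

lemma cplx_of_not_exists_properCore (h : ¬ ∃ c, ProperCore θ φ c) : cplx θ φ = 0 := by
  rw [cplx, dif_neg h]

lemma ProperCore.cplx_eq {c : Σ f : σ, Fin (ar f) → Tm σ ar ℕ} (h : ProperCore θ φ c) :
    cplx θ φ = 1 + Finset.univ.sup fun q : Fin (s + 1) × Fin (ar c.1) =>
      cplx θ ((θ q.1).subst1 (c.2 q.2)) := by
  have hex : ∃ c, ProperCore θ φ c := ⟨c, h⟩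
  rw [cplx, dif_pos hex, hex.choose_spec.unique h]

lemma ProperCore.cplx_arg_lt {c : Σ f : σ, Fin (ar f) → Tm σ ar ℕ} (h : ProperCore θ φ c)
    (t : Fin (s + 1)) (i : Fin (ar c.1)) : cplx θ ((θ t).subst1 (c.2 i)) < cplx θ φ := by
  rw [h.cplx_eq]
  exact Nat.lt_one_add_iff.2 (Finset.le_sup (f := fun q : Fin (s + 1) × Fin (ar c.1) =>
    cplx θ ((θ q.1).subst1 (c.2 q.2))) (Finset.mem_univ (t, i)))

end

theorem cplx_well_defined_general (θ : Fin (s + 1) → Tm σ ar Unit) :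
    ∃ cplx : Tm σ ar ℕ → ℕ,
      (∀ φ : Tm σ ar ℕ, Basic θ φ ∨ Inter θ φ → cplx φ = 0) ∧
      (∀ (r : Fin (s + 1)) (f : σ) (args : Fin (ar f) → Tm σ ar ℕ),
        Proper θ r f ((θ r).subst1 (Tm.app f args)) →
          cplx ((θ r).subst1 (Tm.app f args)) =
            1 + Finset.univ.sup
              (fun p : Fin (s + 1) × Fin (ar f) => cplx ((θ p.1).subst1 (args p.2)))) ∧
      (∀ (r : Fin (s + 1)) (f : σ) (args : Fin (ar f) → Tm σ ar ℕ),
        Proper θ r f ((θ r).subst1 (Tm.app f args)) →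
          ∀ (t : Fin (s + 1)) (i : Fin (ar f)),
            cplx ((θ t).subst1 (args i)) < cplx ((θ r).subst1 (Tm.app f args))) := by
  have core {r f args} (hP : Proper θ r f ((θ r).subst1 (Tm.app f args))) :
      ProperCore θ _ ⟨f, args⟩ := ⟨r, hP, rfl⟩
  refine ⟨cplx θ, fun φ h => cplx_of_not_exists_properCore ?_,
    fun r f args hP => (core hP).cplx_eq, fun r f args hP => (core hP).cplx_arg_lt⟩
  rintro ⟨c, r, hP, -⟩
  exact h.elim hP.1 hP.2.1

/-- the generalized complexity function cplx is well-defined: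
there is a function vanishing on basic and intersection formulas, satisfying the
recursive clause on proper θ_r⊙-formulas, and strictly decreasing from a proper
θ_r⊙-formula to the separators applied to its immediate subformulas. -/
theorem cplx_well_defined (θ : Fin (s + 1) → Tm σ ar Unit)
    (h0 : θ 0 = Tm.var ()) :
    ∃ cplx : Tm σ ar ℕ → ℕ,
      (∀ φ : Tm σ ar ℕ, Basic θ φ ∨ Inter θ φ → cplx φ = 0) ∧
      (∀ (r : Fin (s + 1)) (f : σ) (args : Fin (ar f) → Tm σ ar ℕ),
        Proper θ r f ((θ r).subst1 (Tm.app f args)) →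
          cplx ((θ r).subst1 (Tm.app f args)) =
            1 + Finset.univ.sup
              (fun p : Fin (s + 1) × Fin (ar f) => cplx ((θ p.1).subst1 (args p.2)))) ∧
      (∀ (r : Fin (s + 1)) (f : σ) (args : Fin (ar f) → Tm σ ar ℕ),
        Proper θ r f ((θ r).subst1 (Tm.app f args)) →
          ∀ (t : Fin (s + 1)) (i : Fin (ar f)),
            cplx ((θ t).subst1 (args i)) < cplx ((θ r).subst1 (Tm.app f args))) :=
  cplx_well_defined_general θ

end Stmt14
end

section
/- Let Sem be the set of homomorphisms from the free Σ-algebra of formulas into a finite Σ-algebra V with designated set D and separating sequence θ₀,…,θ_s, and let Sem₂ = {t ∘ w : w ∈ Sem} be the induced classic-like bivalent semantics. Then for any bivaluation b ∈ Sem₂ and any formula φ(p₁,…,p_k), the value b(φ) is uniquely determined by the values b(θ_r(p_i)) for 0 ≤ r ≤ s and 1 ≤ i ≤ k: if b, b′ ∈ Sem₂ agree on all θ_r(p_i), then b(φ) = b′(φ). -/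
namespace Stmt15

/-- Terms (formulas) over a signature `σ` with arity `ar`, variables from `A`. -/
inductive Tm (σ : Type) (ar : σ → ℕ) (A : Type) : Type
  | var (a : A) : Tm σ ar A
  | app (f : σ) (ts : Fin (ar f) → Tm σ ar A) : Tm σ ar A

/-- Substitution of `ψ` for the unique variable of the one-variable term `θ`. -/
def Tm.subst1 {σ : Type} {ar : σ → ℕ} {A : Type} (θ : Tm σ ar Unit) (ψ : Tm σ ar A) :
    Tm σ ar A :=
  match θ with
  | .var _ => ψ
  | .app f ts => .app f (fun i => (ts i).subst1 ψ)

/-- Evaluation of a term in a `σ`-algebra `I` on `V`, under the assignment `e`. -/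
def Tm.eval {σ : Type} {ar : σ → ℕ} {V A : Type} (I : ∀ f : σ, (Fin (ar f) → V) → V)
    (e : A → V) : Tm σ ar A → V
  | .var a => e a
  | .app f ts => I f (fun i => (ts i).eval I e)

lemma subst1_eval {σ : Type} {ar : σ → ℕ} {V A : Type}
    (I : ∀ f : σ, (Fin (ar f) → V) → V) (e : A → V)
    (θ : Tm σ ar Unit) (ψ : Tm σ ar A) :
    (θ.subst1 ψ).eval I e = θ.eval I (fun _ => ψ.eval I e) := by
  induction θ with
  | var a => rfl
  | app f ts ih => simp [Tm.subst1, Tm.eval, ih]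

/-- for bivaluations in the S-reduction of a truth-functional
semantics with a separating sequence, the bivalent value of any formula φ is
uniquely determined by the bivalent values of the separators applied to its
variables: if two valuations agree (after t) on all θ_r(p_i), they agree on φ. -/
theorem bivalent_value_determined {σ : Type} {ar : σ → ℕ} {V A : Type} [Fintype V]
    (I : ∀ f : σ, (Fin (ar f) → V) → V) (D : Set V)
    (t : V → Bool) (ht : ∀ v, t v = true ↔ v ∈ D)
    (s : ℕ) (θ : Fin (s + 1) → Tm σ ar Unit) (h0 : θ 0 = Tm.var ())
    (hsep : ∀ x y : V,
      (∀ r : Fin (s + 1), t ((θ r).eval I (fun _ => x)) = t ((θ r).eval I (fun _ => y))) →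
        x = y)
    (e e' : A → V) (φ : Tm σ ar A)
    (hagree : ∀ (r : Fin (s + 1)) (a : A),
      t (((θ r).subst1 (Tm.var a)).eval I e) = t (((θ r).subst1 (Tm.var a)).eval I e')) :
    t (φ.eval I e) = t (φ.eval I e') := by
  have he : e = e' := by
    funext a
    apply hsep
    intro r
    have := hagree r a
    simpa [subst1_eval, Tm.eval] using this
  rw [he]

end Stmt15
end
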